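/- Let Z ∈ ℚ[p_1, p_2, ...][[t]] and r ≥ 1 an integer. Assume: (i) the coefficient of t^n in Z is a homogeneous polynomial of degree n in the p_i's (where p_i has degree i); (ii) ∂Z/∂t = Σ_{m=1}^{r} t^{m−1} M^{(m)} Z for differential operators M^{(m)} independent of t; (iii) each M^{(m)} can be written as Σ_{i≥1} p_i M_i^{(m)} such that the operators L_i := i∂/∂p_i − Σ_{m=1}^r t^m M_i^{(m)} satisfy: (a) [t^n] L_i F is homogeneous of degree n−i whenever [t^n]F is homogeneous of degree n, and (b) there exist operators D_{ij}^k (polynomial in t) with [L_i, L_j] = t·Σ_{k≥1} D_{ij}^k L_k. Then L_i Z = 0 for all i ≥ 1. -/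

import Mathlib

open MvPolynomial

/-- `p_i^* = i·∂/∂p_i` on `ℚ[p_1, p_2, ...]` (with `X n = p_n`), zero for `i ≤ 0`. -/
noncomputable def pstar (i : ℤ) : MvPolynomial ℕ ℚ → MvPolynomial ℕ ℚ :=
  if 0 < i then fun P => (i : ℚ) • pderiv i.toNat P else 0

/-!
Induction on `n`. Assume `[tᵐ]L_j Z = 0` for all `m < n` and all `j`, and put
`W_j = [tⁿ]L_j Z`, homogeneous of degree `n - j`. Since `[L_i, L_j]` carries a factor `t`, it
vanishes at order `n`, which gives `i∂_i W_j = j∂_j W_i`. The evolution equation together with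
Euler's identity gives `Σ_k p_k W_k = 0`. Euler's identity for `W_i` then yields
`(n - i) W_i = Σ_k p_k k∂_k W_i = Σ_k p_k i∂_i W_k = i∂_i (Σ_k p_k W_k) - i W_i = -i W_i`,
so `n W_i = 0`.
-/

lemma pstar_natCast (k : ℕ) : pstar k = ⇑((k : ℚ) • pderiv (R := ℚ) k) := by
  unfold pstar
  rcases Nat.eq_zero_or_pos k with rfl | hk
  · funext P; simp
  · rw [if_pos (by exact_mod_cast hk)]; funext P; simp

lemma pstar_sum_X_mul {s : Finset ℕ} {i : ℕ} (hi : i ∈ s) (W : ℕ → MvPolynomial ℕ ℚ) :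
    pstar i (∑ k ∈ s, X k * W k) = ∑ k ∈ s, X k * pstar i (W k) + (i : ℚ) • W i := by
  simp only [pstar_natCast, map_sum, Derivation.leibniz, Derivation.smul_apply, pderiv_X,
    Finset.sum_add_distrib, smul_eq_mul]
  simp [Pi.single_apply, hi]

lemma MvPolynomial.IsWeightedHomogeneous.eq_zero_of_neg {σ R : Type*} [CommSemiring R]
    {w : σ → ℤ} (hw : ∀ i, 0 ≤ w i) {P : MvPolynomial σ R} {d : ℤ}
    (hP : P.IsWeightedHomogeneous w d) (hd : d < 0) : P = 0 := by
  ext u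
  rw [coeff_zero]
  by_contra hu
  have hwu : 0 ≤ Finsupp.weight w u :=
    Finset.sum_nonneg fun i _ => nsmul_nonneg (hw i) _
  have := hP hu
  omega

lemma Finsupp.weight_natCast_eq_sum_Icc {u : ℕ →₀ ℕ} {N : ℕ}
    (hu : weight (fun i : ℕ => (i : ℤ)) u ≤ N) :
    weight (fun i : ℕ => (i : ℤ)) u = ∑ k ∈ Finset.Icc 1 N, (u k * k : ℤ) := by
  have hsupp : u.support ⊆ Finset.range (N + 1) := fun k hk => by
    have := le_weight_of_ne_zero (w := fun i : ℕ => (i : ℤ)) (fun _ => by positivity)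
      (mem_support_iff.mp hk)
    rw [Finset.mem_range]; omega
  rw [weight_apply, sum_of_support_subset u hsupp (fun i c => c • (i : ℤ)) fun _ _ => zero_smul ..]
  simp only [nsmul_eq_mul]
  refine (Finset.sum_subset (fun k hk => ?_) (fun k hk' hk => ?_)).symm
  · rw [Finset.mem_Icc] at hk
    rw [Finset.mem_range]; omega
  · rw [Finset.mem_Icc] at hk
    rw [Finset.mem_range] at hk'
    rw [show k = 0 by omega, Nat.cast_zero, mul_zero]

theorem MvPolynomial.IsWeightedHomogeneous.sum_Icc_X_mul_pstar {P : MvPolynomial ℕ ℚ} {d : ℤ}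
    (hP : P.IsWeightedHomogeneous (fun i : ℕ => (i : ℤ)) d) {N : ℕ} (hN : d ≤ N) :
    ∑ k ∈ Finset.Icc 1 N, X k * pstar k P = (d : ℚ) • P := by
  conv_lhs => rw [P.as_sum]
  simp only [pstar_natCast, map_sum, Finset.mul_sum, Derivation.smul_apply, mul_smul_comm,
    X_mul_pderiv_monomial]
  rw [Finset.sum_comm]
  conv_rhs => rw [P.as_sum, Finset.smul_sum]
  refine Finset.sum_congr rfl fun u hu => ?_
  have hw := hP (mem_support_iff.mp hu)
  rw [← hw, Finsupp.weight_natCast_eq_sum_Icc (hw ▸ hN)]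
  simp only [Finset.sum_smul, Int.cast_sum]
  refine Finset.sum_congr rfl fun k _ => ?_
  rw [smul_comm, ← Nat.cast_smul_eq_nsmul ℚ, smul_smul]
  push_cast; ring_nf

theorem eq_zero_of_pstar_symm_of_sum_X_mul_eq_zero {n : ℕ} {W : ℕ → MvPolynomial ℕ ℚ}
    (hW : ∀ k, 1 ≤ k → (W k).IsWeightedHomogeneous (fun i : ℕ => (i : ℤ)) (n - k))
    (hsymm : ∀ j k : ℕ, 1 ≤ j → 1 ≤ k → pstar j (W k) = pstar k (W j))
    (hsum : ∑ k ∈ Finset.Icc 1 n, X k * W k = 0) {i : ℕ} (hi : 1 ≤ i) : W i = 0 := by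
  rcases lt_or_ge n i with hni | hin
  · exact (hW i hi).eq_zero_of_neg (fun _ => Nat.cast_nonneg _) (by omega)
  have euler : ((n - i : ℤ) : ℚ) • W i = -((i : ℚ) • W i) := calc
    _ = ∑ k ∈ Finset.Icc 1 n, X k * pstar k (W i) :=
      ((hW i hi).sum_Icc_X_mul_pstar (by omega)).symm
    _ = ∑ k ∈ Finset.Icc 1 n, X k * pstar i (W k) :=
      Finset.sum_congr rfl fun k hk => by rw [hsymm k i (Finset.mem_Icc.mp hk).1 hi]
    _ = pstar i (∑ k ∈ Finset.Icc 1 n, X k * W k) - (i : ℚ) • W i := by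
      rw [pstar_sum_X_mul (Finset.mem_Icc.mpr ⟨hi, hin⟩), add_sub_cancel_right]
    _ = _ := by rw [hsum, pstar_natCast, map_zero, zero_sub]
  have hn : (n : ℚ) • W i = 0 := by
    rw [← eq_neg_iff_add_eq_zero.mp euler, ← add_smul]; push_cast; ring_nf
  exact (smul_eq_zero.mp hn).resolve_left (by norm_cast; omega)

def IsGradedSeries (F : ℕ → MvPolynomial ℕ ℚ) : Prop :=
  ∀ n : ℕ, (F n).IsWeightedHomogeneous (fun i : ℕ => (i : ℤ)) n

noncomputable def constraintOp (r : ℕ) (Mi : ℕ → ℕ → MvPolynomial ℕ ℚ →ₗ[ℚ] MvPolynomial ℕ ℚ)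
    (i : ℕ) (F : ℕ → MvPolynomial ℕ ℚ) (n : ℕ) : MvPolynomial ℕ ℚ :=
  pstar i (F n) - ∑ m ∈ Finset.Icc 1 r, if m ≤ n then Mi m i (F (n - m)) else 0

def LowersDegreeByIndex (L : ℕ → (ℕ → MvPolynomial ℕ ℚ) → ℕ → MvPolynomial ℕ ℚ) : Prop :=
  ∀ F, IsGradedSeries F → ∀ i, 1 ≤ i → ∀ n : ℕ,
    (L i F n).IsWeightedHomogeneous (fun i : ℕ => (i : ℤ)) (n - i)

section constraintOp

variable {r : ℕ} {Mi : ℕ → ℕ → MvPolynomial ℕ ℚ →ₗ[ℚ] MvPolynomial ℕ ℚ}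

lemma constraintOp_eq_pstar_of_forall_lt {F : ℕ → MvPolynomial ℕ ℚ} {n : ℕ}
    (hF : ∀ m < n, F m = 0) (i : ℕ) : constraintOp r Mi i F n = pstar i (F n) := by
  refine sub_eq_self.mpr (Finset.sum_eq_zero fun m hm => ?_)
  have := (Finset.mem_Icc.mp hm).1
  split_ifs with hmn
  · rw [hF (n - m) (by omega), map_zero]
  · rfl

lemma isWeightedHomogeneous_Mi (hL : LowersDegreeByIndex (constraintOp r Mi)) {m k : ℕ}
    (hm : m ∈ Finset.Icc 1 r) (hk : 1 ≤ k) {P : MvPolynomial ℕ ℚ} {e : ℕ}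
    (hP : P.IsWeightedHomogeneous (fun i : ℕ => (i : ℤ)) e) :
    (Mi m k P).IsWeightedHomogeneous (fun i : ℕ => (i : ℤ)) (e + m - k) := by
  have hm1 := (Finset.mem_Icc.mp hm).1
  -- `L_k` of the series `P tᵉ` has `t^(e+m)`-coefficient `-M_k⁽ᵐ⁾ P`.
  have hF : IsGradedSeries (Pi.single e P) := fun n => by
    rcases eq_or_ne n e with rfl | hne
    · simpa using hP
    · simpa [Pi.single_eq_of_ne hne] using isWeightedHomogeneous_zero ℚ _ _
  have hsum : (∑ m' ∈ Finset.Icc 1 r, if m' ≤ e + m then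
      Mi m' k (Pi.single (M := fun _ => MvPolynomial ℕ ℚ) e P (e + m - m')) else 0) = Mi m k P := by
    rw [Finset.sum_eq_single_of_mem m hm fun m' _ hne => ?_]
    · simp
    · split_ifs
      · rw [Pi.single_eq_of_ne (by omega), map_zero]
      · rfl
  have := hL _ hF k hk (e + m)
  rw [constraintOp, Pi.single_eq_of_ne (by omega), pstar_natCast, map_zero, hsum, zero_sub] at this
  simpa using this.neg

lemma finsum_X_mul_Mi_eq_sum (hL : LowersDegreeByIndex (constraintOp r Mi)) {m : ℕ}
    (hm : m ∈ Finset.Icc 1 r) {P : MvPolynomial ℕ ℚ} {e N : ℕ}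
    (hP : P.IsWeightedHomogeneous (fun i : ℕ => (i : ℤ)) e) (hN : e + m ≤ N) :
    (∑ᶠ k : ℕ, if 1 ≤ k then X k * Mi m k P else 0) = ∑ k ∈ Finset.Icc 1 N, X k * Mi m k P := by
  rw [finsum_eq_sum_of_support_subset _ (s := Finset.Icc 1 N) fun k hk => ?_]
  · exact Finset.sum_congr rfl fun k hk => if_pos (Finset.mem_Icc.mp hk).1
  · rw [Function.mem_support] at hk
    split_ifs at hk with hk1
    · have hkN : k ≤ N := by
        by_contra hkN
        refine hk ?_
        rw [(isWeightedHomogeneous_Mi hL hm hk1 hP).eq_zero_of_neg (fun _ => Nat.cast_nonneg _)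
          (by omega), mul_zero]
      simp [hk1, hkN]
    · exact absurd rfl hk

theorem sum_X_mul_constraintOp_eq_zero {Z : ℕ → MvPolynomial ℕ ℚ} (hZ : IsGradedSeries Z)
    {Mev : ℕ → MvPolynomial ℕ ℚ →ₗ[ℚ] MvPolynomial ℕ ℚ}
    (hev : ∀ n : ℕ, ((n : ℚ) + 1) • Z (n + 1)
        = ∑ m ∈ Finset.Icc 1 r, if m ≤ n + 1 then Mev m (Z (n + 1 - m)) else 0)
    (hM : ∀ m ∈ Finset.Icc 1 r, ∀ P,
        Mev m P = ∑ᶠ i : ℕ, if 1 ≤ i then X i * Mi m i P else 0)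
    (hL : LowersDegreeByIndex (constraintOp r Mi)) (n : ℕ) :
    ∑ k ∈ Finset.Icc 1 n, X k * constraintOp r Mi k Z n = 0 := by
  cases n with
  | zero => simp
  | succ n =>
    have hMev : ∀ m ∈ Finset.Icc 1 r, (if m ≤ n + 1 then Mev m (Z (n + 1 - m)) else 0)
        = ∑ k ∈ Finset.Icc 1 (n + 1), X k * if m ≤ n + 1 then Mi m k (Z (n + 1 - m)) else 0 := by
      intro m hm
      split_ifs with hmn
      · rw [hM m hm, finsum_X_mul_Mi_eq_sum (N := n + 1) hL hm (hZ _) (by omega)]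
      · simp
    calc ∑ k ∈ Finset.Icc 1 (n + 1), X k * constraintOp r Mi k Z (n + 1)
        = (((n + 1 : ℕ) : ℤ) : ℚ) • Z (n + 1) - ∑ m ∈ Finset.Icc 1 r,
            (if m ≤ n + 1 then Mev m (Z (n + 1 - m)) else 0) := by
          simp only [constraintOp, mul_sub, Finset.sum_sub_distrib, Finset.mul_sum,
            (hZ (n + 1)).sum_Icc_X_mul_pstar le_rfl, Finset.sum_congr rfl hMev]
          rw [Finset.sum_comm]
      _ = 0 := by rw [← hev]; push_cast; exact sub_self _

lemma pstar_constraintOp_symm {Z : ℕ → MvPolynomial ℕ ℚ}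
    {D : ℕ → ℕ → ℕ → ℕ → MvPolynomial ℕ ℚ →ₗ[ℚ] MvPolynomial ℕ ℚ}
    (hcomm : ∀ i j : ℕ, 1 ≤ i → 1 ≤ j → ∀ (F : ℕ → MvPolynomial ℕ ℚ) (n : ℕ),
        constraintOp r Mi i (constraintOp r Mi j F) n
            - constraintOp r Mi j (constraintOp r Mi i F) n
          = ∑ᶠ l : ℕ, if 1 ≤ l then
              ∑ m ∈ Finset.range n, D i j l m (constraintOp r Mi l F (n - 1 - m)) else 0)
    {n : ℕ} (hlow : ∀ m < n, ∀ l, 1 ≤ l → constraintOp r Mi l Z m = 0)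
    {i j : ℕ} (hi : 1 ≤ i) (hj : 1 ≤ j) :
    pstar i (constraintOp r Mi j Z n) = pstar j (constraintOp r Mi i Z n) := by
  have hrhs : (∑ᶠ l : ℕ, if 1 ≤ l then
      ∑ m ∈ Finset.range n, D i j l m (constraintOp r Mi l Z (n - 1 - m)) else 0) = 0 := by
    refine finsum_eq_zero_of_forall_eq_zero fun l => ?_
    split_ifs with hl
    · exact Finset.sum_eq_zero fun m hm => by
        rw [hlow _ (by rw [Finset.mem_range] at hm; omega) l hl, map_zero]
    · rfl
  have h := hcomm i j hi hj Z n
  rwa [hrhs, sub_eq_zero, constraintOp_eq_pstar_of_forall_lt (hlow · · j hj),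
    constraintOp_eq_pstar_of_forall_lt (hlow · · i hi)] at h

end constraintOp

/-- A series is encoded by its coefficients `Z n = [tⁿ]Z`, `Lapp i F n = [tⁿ](L_i F)`, and
`D i j k m = [tᵐ]D_{ij}^k`. -/
theorem constraint_extraction_general (r : ℕ)
    (Z : ℕ → MvPolynomial ℕ ℚ)
    (hhom : ∀ n : ℕ,
        MvPolynomial.IsWeightedHomogeneous (fun i : ℕ => (i : ℤ)) (Z n) (n : ℤ))
    (Mev : ℕ → MvPolynomial ℕ ℚ →ₗ[ℚ] MvPolynomial ℕ ℚ)
    (hev : ∀ n : ℕ, ((n : ℚ) + 1) • Z (n + 1)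
        = ∑ m ∈ Finset.Icc 1 r, if m ≤ n + 1 then Mev m (Z (n + 1 - m)) else 0)
    (Mi : ℕ → ℕ → MvPolynomial ℕ ℚ →ₗ[ℚ] MvPolynomial ℕ ℚ)
    (hM : ∀ m ∈ Finset.Icc 1 r, ∀ P,
        Mev m P = ∑ᶠ i : ℕ, if 1 ≤ i then X i * Mi m i P else 0)
    (Lapp : ℕ → (ℕ → MvPolynomial ℕ ℚ) → (ℕ → MvPolynomial ℕ ℚ))
    (hLapp : ∀ (i : ℕ) (F : ℕ → MvPolynomial ℕ ℚ) (n : ℕ), Lapp i F n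
        = pstar (i : ℤ) (F n)
          - ∑ m ∈ Finset.Icc 1 r, if m ≤ n then Mi m i (F (n - m)) else 0)
    (hhomL : ∀ (F : ℕ → MvPolynomial ℕ ℚ),
        (∀ n : ℕ, MvPolynomial.IsWeightedHomogeneous (fun i : ℕ => (i : ℤ)) (F n) (n : ℤ)) →
        ∀ i : ℕ, 1 ≤ i → ∀ n : ℕ,
          MvPolynomial.IsWeightedHomogeneous (fun i : ℕ => (i : ℤ)) (Lapp i F n)
            ((n : ℤ) - i))
    (D : ℕ → ℕ → ℕ → ℕ → MvPolynomial ℕ ℚ →ₗ[ℚ] MvPolynomial ℕ ℚ)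
    (hcomm : ∀ i j : ℕ, 1 ≤ i → 1 ≤ j → ∀ (F : ℕ → MvPolynomial ℕ ℚ) (n : ℕ),
        Lapp i (Lapp j F) n - Lapp j (Lapp i F) n
          = ∑ᶠ l : ℕ, if 1 ≤ l then
              ∑ m ∈ Finset.range n, D i j l m (Lapp l F (n - 1 - m)) else 0) :
    ∀ i : ℕ, 1 ≤ i → ∀ n : ℕ, Lapp i Z n = 0 := by
  obtain rfl : Lapp = constraintOp r Mi := by
    funext i F n
    rw [hLapp i F n, constraintOp]
  intro i hi n
  induction n using Nat.strong_induction_on generalizing i with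
  | _ n ih =>
    exact eq_zero_of_pstar_symm_of_sum_X_mul_eq_zero (fun k hk => hhomL Z hhom k hk n)
      (fun j k hj hk => pstar_constraintOp_symm hcomm ih hj hk)
      (sum_X_mul_constraintOp_eq_zero hhom hev hM hhomL n) hi

/-- The constraint-extraction lemma. A series `Z ∈ ℚ[p₁,p₂,…][[t]]` is identified with its
family of coefficients `Z n = [tⁿ]Z`; the variable `p_i` has (weighted) degree `i`. Assume:
(i) `[tⁿ]Z` is homogeneous of degree `n`;
(ii) the evolution equation `∂Z/∂t = Σ_{m=1}^{r} t^{m−1} M⁽ᵐ⁾ Z` holds, i.e. coefficientwise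
`(n+1)·Z_{n+1} = Σ_{m=1}^{min(r,n+1)} M⁽ᵐ⁾ Z_{n+1−m}`;
(iii) `M⁽ᵐ⁾ = Σ_{i≥1} p_i M_i⁽ᵐ⁾` (pointwise, locally finite), and the candidate constraints
`L_i = i∂/∂p_i − Σ_{m=1}^r tᵐ M_i⁽ᵐ⁾` (acting coefficientwise on series via `Lapp`) satisfy
(a) `[tⁿ]L_iF` is homogeneous of degree `n−i` whenever every `[tⁿ]F` is homogeneous of
degree `n`, and (b) `[L_i, L_j] = t·Σ_{k≥1} D_{ij}^k L_k` for some operators `D_{ij}^k`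
polynomial in `t` (given by their `t`-coefficients `D i j k m`).
Then `L_i Z = 0` for all `i ≥ 1`. -/
theorem constraint_extraction (r : ℕ) (hr : 1 ≤ r)
    (Z : ℕ → MvPolynomial ℕ ℚ)
    (hhom : ∀ n : ℕ,
        MvPolynomial.IsWeightedHomogeneous (fun i : ℕ => (i : ℤ)) (Z n) (n : ℤ))
    (Mev : ℕ → MvPolynomial ℕ ℚ →ₗ[ℚ] MvPolynomial ℕ ℚ)
    (hev : ∀ n : ℕ, ((n : ℚ) + 1) • Z (n + 1)
        = ∑ m ∈ Finset.Icc 1 r, if m ≤ n + 1 then Mev m (Z (n + 1 - m)) else 0)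
    (Mi : ℕ → ℕ → MvPolynomial ℕ ℚ →ₗ[ℚ] MvPolynomial ℕ ℚ)
    (hM : ∀ m ∈ Finset.Icc 1 r, ∀ P,
        Mev m P = ∑ᶠ i : ℕ, if 1 ≤ i then X i * Mi m i P else 0)
    (Lapp : ℕ → (ℕ → MvPolynomial ℕ ℚ) → (ℕ → MvPolynomial ℕ ℚ))
    (hLapp : ∀ (i : ℕ) (F : ℕ → MvPolynomial ℕ ℚ) (n : ℕ), Lapp i F n
        = pstar (i : ℤ) (F n)
          - ∑ m ∈ Finset.Icc 1 r, if m ≤ n then Mi m i (F (n - m)) else 0)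
    (hhomL : ∀ (F : ℕ → MvPolynomial ℕ ℚ),
        (∀ n : ℕ, MvPolynomial.IsWeightedHomogeneous (fun i : ℕ => (i : ℤ)) (F n) (n : ℤ)) →
        ∀ i : ℕ, 1 ≤ i → ∀ n : ℕ,
          MvPolynomial.IsWeightedHomogeneous (fun i : ℕ => (i : ℤ)) (Lapp i F n)
            ((n : ℤ) - i))
    (D : ℕ → ℕ → ℕ → ℕ → MvPolynomial ℕ ℚ →ₗ[ℚ] MvPolynomial ℕ ℚ)
    (hDpoly : ∀ i j l : ℕ, ∃ N : ℕ, ∀ m : ℕ, N ≤ m → D i j l m = 0)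
    (hcomm : ∀ i j : ℕ, 1 ≤ i → 1 ≤ j → ∀ (F : ℕ → MvPolynomial ℕ ℚ) (n : ℕ),
        Lapp i (Lapp j F) n - Lapp j (Lapp i F) n
          = ∑ᶠ l : ℕ, if 1 ≤ l then
              ∑ m ∈ Finset.range n, D i j l m (Lapp l F (n - 1 - m)) else 0) :
    ∀ i : ℕ, 1 ≤ i → ∀ n : ℕ, Lapp i Z n = 0 :=
  constraint_extraction_general r Z hhom Mev hev Mi hM Lapp hLapp hhomL D hcomm
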